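/- Let Q be a quiver of type A_n, let L, E be indecomposable representations of Q over ℂ, and let f : L → E be a nonzero homomorphism. Then the image of f is an indecomposable representation. -/

import Mathlib

/-!  Representations of a quiver of type `A_{n+1}`:  vertices `Fin (n+1)`, edges `Fin n`,
where the edge `i` joins the vertices `i` and `i+1` and the orientation function
`o : Fin n → Bool` orients it from `i` to `i+1` (if `o i = true`) or from `i+1` to `i`
(if `o i = false`). -/

/-- Source of the `i`-th arrow. -/
def ASrc {n : ℕ} (o : Fin n → Bool) (i : Fin n) : Fin (n + 1) :=
  if o i then i.castSucc else i.succ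

/-- Target of the `i`-th arrow. -/
def ATgt {n : ℕ} (o : Fin n → Bool) (i : Fin n) : Fin (n + 1) :=
  if o i then i.succ else i.castSucc

/-- A finite-dimensional complex representation of the `A_{n+1}` quiver with orientation `o`. -/
structure ARep (n : ℕ) (o : Fin n → Bool) where
  M : Fin (n + 1) → Type
  [addCommGroup : ∀ v, AddCommGroup (M v)]
  [module : ∀ v, Module ℂ (M v)]
  [finite : ∀ v, FiniteDimensional ℂ (M v)]
  f : ∀ i : Fin n, M (ASrc o i) →ₗ[ℂ] M (ATgt o i)

attribute [instance] ARep.addCommGroup ARep.module ARep.finite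

namespace ARep

variable {n : ℕ} {o : Fin n → Bool}

/-- The space of morphisms `X → Y` of representations, as a submodule of
`∀ v, X.M v →ₗ Y.M v`. -/
def HomSub (X Y : ARep n o) : Submodule ℂ (∀ v, X.M v →ₗ[ℂ] Y.M v) where
  carrier := {h | ∀ i : Fin n, (h (ATgt o i)).comp (X.f i) = (Y.f i).comp (h (ASrc o i))}
  add_mem' := by
    intro a b ha hb i
    simp only [Pi.add_apply, LinearMap.add_comp, LinearMap.comp_add, ha i, hb i]
  zero_mem' := by
    intro i
    simp
  smul_mem' := by
    intro c a ha i
    simp only [Pi.smul_apply, LinearMap.smul_comp, LinearMap.comp_smul, ha i]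

/-- The differential of the standard 2-term complex computing `Hom` (kernel) and `Ext¹`
(cokernel) over the hereditary path algebra. -/
noncomputable def extMap (X Y : ARep n o) :
    (∀ v, X.M v →ₗ[ℂ] Y.M v) →ₗ[ℂ] (∀ i : Fin n, X.M (ASrc o i) →ₗ[ℂ] Y.M (ATgt o i)) where
  toFun h := fun i => (Y.f i).comp (h (ASrc o i)) - (h (ATgt o i)).comp (X.f i)
  map_add' a b := by
    funext i
    simp only [Pi.add_apply, LinearMap.comp_add, LinearMap.add_comp]
    abel
  map_smul' c a := by
    funext i
    simp only [Pi.smul_apply, LinearMap.comp_smul, LinearMap.smul_comp, smul_sub,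
      RingHom.id_apply]

/-- `dim Hom(X,Y)`. -/
noncomputable def dimHom (X Y : ARep n o) : ℕ :=
  Module.finrank ℂ (HomSub X Y)

/-- `dim Ext¹(X,Y)`. -/
noncomputable def dimExt (X Y : ARep n o) : ℕ :=
  Module.finrank ℂ
    ((∀ i : Fin n, X.M (ASrc o i) →ₗ[ℂ] Y.M (ATgt o i)) ⧸ LinearMap.range (extMap X Y))

/-- A representation is indecomposable iff it is nonzero and its only idempotent
endomorphisms are `0` and the identity. -/
def Indecomposable (X : ARep n o) : Prop :=
  (∃ v, ∃ x : X.M v, x ≠ 0) ∧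
  ∀ e : ∀ v, X.M v →ₗ[ℂ] X.M v, e ∈ HomSub X X → (∀ v, (e v).comp (e v) = e v) →
    e = 0 ∨ e = fun _ => LinearMap.id

end ARep

namespace ARep

/-- The image of a morphism of representations `h : X → Y`, as a representation: its vertex
spaces are the images `range (h v)` and its arrow maps are the restrictions of those of `Y`. -/
noncomputable def imRep {n : ℕ} {o : Fin n → Bool} (X Y : ARep n o)
    (h : ∀ v, X.M v →ₗ[ℂ] Y.M v) (hh : h ∈ HomSub X Y) : ARep n o where
  M v := LinearMap.range (h v)
  f i := (Y.f i).restrict (p := LinearMap.range (h (ASrc o i)))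
    (q := LinearMap.range (h (ATgt o i)))
    (by
      rintro x ⟨y, rfl⟩
      refine ⟨X.f i y, ?_⟩
      have := congrArg (fun g => g y) (hh i)
      simpa using this)

/-!
Every indecomposable representation of a quiver of type `A` is an interval module: its spaces are
one-dimensional on a segment `[a, b]` of vertices and zero elsewhere, and the arrows inside the
segment are nonzero. To see this, one builds an idempotent endomorphism whose image is an interval
module by descending induction on the leftmost vertex `p` it involves, starting from a rank-one
projection at `p` and extending it to the left one arrow at a time. Crossing an injective arrow
`g` (or a surjective one) the projection at `p` must be compatible with the image of `g` (or its
kernel) and with the images (or preimages) of all subspaces met before, so the induction carries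
a chain of subspaces that every projection has to split. For an indecomposable representation this
idempotent must be the identity.

A morphism from the interval module on `[a, b]` to the one on `[c, d]` vanishes outside
`[a ⊔ c, b ⊓ d]`; inside, the arrows of both are isomorphisms, so it is zero at one vertex of that
segment iff at all of them. Hence a nonzero morphism has rank one at each vertex of the segment,
and its image is the interval module on `[a ⊔ c, b ⊓ d]`, which is indecomposable.
-/

end ARep

open Module LinearMap Submodule

namespace Submodule

variable {K V : Type*} [Field K] [AddCommGroup V] [Module K V]

theorem exists_mem_of_isChain [FiniteDimensional K V] {P Q : Submodule K V} (hPQ : ¬P ≤ Q)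
    {F : Set (Submodule K V)} (hF : IsChain (· ≤ ·) F) :
    ∃ x ∈ P, x ∉ Q ∧ ∀ U ∈ F, ¬P ⊓ U ≤ Q → x ∈ U := by
  by_cases hbad : {U ∈ F | ¬P ⊓ U ≤ Q}.Nonempty
  · -- take `x` in the smallest such `U`
    obtain ⟨U₀, ⟨hU₀F, hU₀⟩, hmin⟩ := wellFounded_lt.has_min _ hbad
    obtain ⟨x, ⟨hxP, hxU₀⟩, hxQ⟩ := SetLike.not_le_iff_exists.mp hU₀
    refine ⟨x, hxP, hxQ, fun U hUF hU ↦ ?_⟩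
    rcases hF.total hU₀F hUF with h | h
    · exact h hxU₀
    · rcases h.lt_or_eq with h | rfl
      · exact absurd h (hmin U ⟨hUF, hU⟩)
      · exact hxU₀
  · obtain ⟨x, hxP, hxQ⟩ := SetLike.not_le_iff_exists.mp hPQ
    exact ⟨x, hxP, hxQ, fun U hUF hU ↦ absurd ⟨U, hUF, hU⟩ hbad⟩

end Submodule

namespace LinearMap

variable {K V W : Type*} [Field K] [AddCommGroup V] [Module K V] [AddCommGroup W] [Module K W]

theorem eq_zero_or_eq_id_of_comp_self (hV : finrank K V = 1) {u : V →ₗ[K] V} (hu : u ∘ₗ u = u) :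
    u = 0 ∨ u = LinearMap.id := by
  classical
  have := isSimpleModule_iff_finrank_eq_one.mpr hV
  exact IsIdempotentElem.iff_eq_zero_or_one (G₀ := Module.End K V).mp hu

theorem bijective_of_finrank_eq_one (hV : finrank K V = 1) (hW : finrank K W = 1)
    {f : V →ₗ[K] W} (hf : f ≠ 0) : Function.Bijective f := by
  have := isSimpleModule_iff_finrank_eq_one.mpr hV
  have := isSimpleModule_iff_finrank_eq_one.mpr hW
  exact bijective_of_ne_zero hf

theorem exists_comp_self_range_eq_span {T : Submodule K V} {x : V} (hx : x ∉ T) :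
    ∃ u : V →ₗ[K] V, u ∘ₗ u = u ∧ range u = K ∙ x ∧ T ≤ ker u := by
  obtain ⟨φ, hφT, hφx⟩ := exists_extend_of_notMem (0 : T →ₗ[K] K) hx 1
  refine ⟨φ.smulRight x, ?_, le_antisymm ?_ ?_, fun y hy ↦ ?_⟩
  · ext y
    simp [hφx]
  · rintro _ ⟨y, rfl⟩
    exact Submodule.smul_mem _ _ (mem_span_singleton_self x)
  · rw [span_le, Set.singleton_subset_iff]
    exact ⟨x, by simp [hφx]⟩
  · have : φ y = 0 := by simpa using congr($hφT ⟨y, hy⟩)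
    simp [this]

theorem exists_comp_self_splitting [FiniteDimensional K V] {P Q : Submodule K V} (hQP : Q ≤ P)
    (hPQ : ¬P ≤ Q) {F : Set (Submodule K V)} (hF : IsChain (· ≤ ·) F) :
    ∃ u : V →ₗ[K] V, u ∘ₗ u = u ∧ finrank K (range u) = 1 ∧ range u ≤ P ∧ Q ≤ ker u ∧
      ∀ U ∈ F, U ≤ ker u ∨ range u ≤ U := by
  set G := {U ∈ F | P ⊓ U ≤ Q}
  have hG : P ⊓ sSup G ≤ Q := by
    rw [(hF.mono (Set.sep_subset _ _)).directedOn.inf_sSup_eq]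
    exact iSup₂_le fun U hU ↦ hU.2
  obtain ⟨x, hxP, hxQ, hxF⟩ := exists_mem_of_isChain hPQ hF
  have hxQG : x ∉ Q ⊔ sSup G := fun hx ↦ hxQ <| by
    have : x ∈ (Q ⊔ sSup G) ⊓ P := ⟨hx, hxP⟩
    rw [sup_inf_assoc_of_le _ hQP, inf_comm] at this
    exact sup_le le_rfl hG this
  obtain ⟨u, hu, hrange, hker⟩ := exists_comp_self_range_eq_span hxQG
  refine ⟨u, hu, ?_, ?_, le_sup_left.trans hker, fun U hU ↦ ?_⟩
  · rw [hrange, finrank_span_singleton]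
    rintro rfl
    exact hxQ Q.zero_mem
  · rwa [hrange, span_le, Set.singleton_subset_iff]
  · by_cases hgood : P ⊓ U ≤ Q
    · exact Or.inl ((le_sSup (show U ∈ G from ⟨hU, hgood⟩)).trans (le_sup_right.trans hker))
    · rw [hrange, span_le, Set.singleton_subset_iff]
      exact Or.inr (hxF U hU hgood)

theorem exists_intertwined_comp_self_of_injective {g : V →ₗ[K] W} (hg : Function.Injective g)
    {e : W →ₗ[K] W} (he : e ∘ₗ e = e) (hrank : finrank K (range e) = 1) (hrange : range e ≤ range g)
    {F : Set (Submodule K V)} (hF : ∀ U ∈ F, U.map g ≤ ker e ∨ range e ≤ U.map g) :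
    ∃ u : V →ₗ[K] V, u ∘ₗ u = u ∧ finrank K (range u) = 1 ∧ e ∘ₗ g = g ∘ₗ u ∧
      ∀ U ∈ F, U ≤ ker u ∨ range u ≤ U := by
  obtain ⟨r, hr⟩ := g.exists_leftInverse_of_injective (ker_eq_bot.mpr hg)
  set u := r ∘ₗ e ∘ₗ g
  have hgu : g ∘ₗ u = e ∘ₗ g := by
    ext x
    obtain ⟨y, hy⟩ := hrange ⟨g x, rfl⟩
    change g (r (e (g x))) = e (g x)
    rw [← hy, ← LinearMap.comp_apply r g, hr, id_apply]
  have hgu_apply (x : V) : g (u x) = e (g x) := congr($hgu x)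
  refine ⟨u, (cancel_left hg).mp ?_, ?_, hgu.symm, fun U hU ↦ ?_⟩
  · rw [← LinearMap.comp_assoc, hgu, LinearMap.comp_assoc, hgu, ← LinearMap.comp_assoc, he]
  · have hrange_eg : range (e ∘ₗ g) = range e := by
      refine le_antisymm (range_comp_le_range _ _) ?_
      rintro _ ⟨w, rfl⟩
      obtain ⟨x, hx⟩ := hrange ⟨w, rfl⟩
      exact ⟨x, by rw [LinearMap.comp_apply, hx, ← LinearMap.comp_apply e e, he]⟩
    rw [(equivMapOfInjective g hg _).finrank_eq, ← range_comp, hgu, hrange_eg, hrank]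
  · rcases hF U hU with h | h
    · refine Or.inl fun x hx ↦ hg ?_
      rw [map_zero, hgu_apply]
      exact h ⟨x, hx, rfl⟩
    · refine Or.inr ?_
      rintro _ ⟨x, rfl⟩
      obtain ⟨y, hyU, hy⟩ := h ⟨g x, rfl⟩
      rwa [← hg (hy.trans (hgu_apply x).symm)]

theorem exists_intertwined_comp_self_of_surjective [FiniteDimensional K V] {g : W →ₗ[K] V}
    (hg : Function.Surjective g) {e : W →ₗ[K] W} (he : e ∘ₗ e = e)
    (hrank : finrank K (range e) = 1) (hker : ker g ≤ ker e) (hge : g ∘ₗ e ≠ 0)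
    {F : Set (Submodule K V)} (hF : ∀ U ∈ F, U.comap g ≤ ker e ∨ range e ≤ U.comap g) :
    ∃ u : V →ₗ[K] V, u ∘ₗ u = u ∧ finrank K (range u) = 1 ∧ u ∘ₗ g = g ∘ₗ e ∧
      ∀ U ∈ F, U ≤ ker u ∨ range u ≤ U := by
  obtain ⟨s, hs⟩ := g.exists_rightInverse_of_surjective (range_eq_top.mpr hg)
  set u := g ∘ₗ e ∘ₗ s
  have hug : u ∘ₗ g = g ∘ₗ e := by
    ext w
    have : s (g w) - w ∈ ker g := by simp [← LinearMap.comp_apply g s, hs]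
    have : e (s (g w)) = e w := by simpa [sub_eq_zero] using hker this
    simp [u, this]
  have hug_apply (w : W) : u (g w) = g (e w) := congr($hug w)
  have := Module.finite_of_finrank_eq_succ hrank
  refine ⟨u, (cancel_right hg).mp ?_, ?_, hug, fun U hU ↦ ?_⟩
  · rw [LinearMap.comp_assoc, hug, ← LinearMap.comp_assoc, hug, LinearMap.comp_assoc, he]
  · have hrange_u : range u = (range e).map g := by
      rw [← range_comp_of_range_eq_top u (range_eq_top.mpr hg), hug, range_comp]
    refine le_antisymm ?_ (one_le_finrank_iff.mpr ?_)
    · exact hrange_u ▸ hrank ▸ finrank_map_le g (range e)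
    · rw [Ne, range_eq_bot]
      intro hu
      exact hge (by rw [← hug, hu, zero_comp])
  · rcases hF U hU with h | h
    · refine Or.inl fun x hx ↦ ?_
      obtain ⟨w, rfl⟩ := hg x
      rw [mem_ker, hug_apply, h hx, map_zero]
    · refine Or.inr ?_
      rintro _ ⟨x, rfl⟩
      obtain ⟨w, rfl⟩ := hg x
      rw [hug_apply]
      exact h ⟨w, rfl⟩

end LinearMap

namespace ARep

variable {n : ℕ} {o : Fin n → Bool}

theorem ASrc_of_true {i : Fin n} (h : o i = true) : ASrc o i = i.castSucc := by simp [ASrc, h]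

theorem ATgt_of_true {i : Fin n} (h : o i = true) : ATgt o i = i.succ := by simp [ATgt, h]

theorem ASrc_of_false {i : Fin n} (h : o i = false) : ASrc o i = i.succ := by simp [ASrc, h]

theorem ATgt_of_false {i : Fin n} (h : o i = false) : ATgt o i = i.castSucc := by
  simp [ATgt, h]

theorem castSucc_le_ASrc (i : Fin n) : i.castSucc ≤ ASrc o i := by
  unfold ASrc; split <;> simp [Fin.castSucc_lt_succ.le]

theorem castSucc_le_ATgt (i : Fin n) : i.castSucc ≤ ATgt o i := by
  unfold ATgt; split <;> simp [Fin.castSucc_lt_succ.le]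

theorem ASrc_mem_Icc {a b : Fin (n + 1)} {i : Fin n} (ha : a ≤ i.castSucc) (hb : i.succ ≤ b) :
    ASrc o i ∈ Set.Icc a b := by
  unfold ASrc; split
  · exact ⟨ha, Fin.castSucc_lt_succ.le.trans hb⟩
  · exact ⟨ha.trans Fin.castSucc_lt_succ.le, hb⟩

theorem ATgt_mem_Icc {a b : Fin (n + 1)} {i : Fin n} (ha : a ≤ i.castSucc) (hb : i.succ ≤ b) :
    ATgt o i ∈ Set.Icc a b := by
  unfold ATgt; split
  · exact ⟨ha.trans Fin.castSucc_lt_succ.le, hb⟩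
  · exact ⟨ha, Fin.castSucc_lt_succ.le.trans hb⟩

theorem castSucc_iff_succ_of_ASrc_iff_ATgt {P : Fin (n + 1) → Prop} {i : Fin n}
    (h : P (ASrc o i) ↔ P (ATgt o i)) : P i.castSucc ↔ P i.succ := by
  unfold ASrc ATgt at h; split at h
  · exact h
  · exact h.symm

theorem iff_of_forall_castSucc_iff_succ {P : Fin (n + 1) → Prop} {a b : Fin (n + 1)}
    (h : ∀ i : Fin n, a ≤ i.castSucc → i.succ ≤ b → (P i.castSucc ↔ P i.succ)) :
    ∀ v ∈ Set.Icc a b, P v ↔ P a := by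
  intro v hv
  induction v using Fin.induction with
  | zero => rw [Fin.le_zero_iff.mp hv.1]
  | succ i ih =>
    rcases hv.1.eq_or_lt with rfl | hlt
    · rfl
    · have ha : a ≤ i.castSucc := Fin.le_castSucc_iff.mpr hlt
      exact (h i ha hv.2).symm.trans (ih ⟨ha, Fin.castSucc_lt_succ.le.trans hv.2⟩)

def CommutesAt (X : ARep n o) (e : ∀ v, X.M v →ₗ[ℂ] X.M v) (i : Fin n) : Prop :=
  e (ATgt o i) ∘ₗ X.f i = X.f i ∘ₗ e (ASrc o i)

theorem commutesAt_zero (X : ARep n o) (i : Fin n) : X.CommutesAt 0 i := by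
  simp [CommutesAt]

theorem commutesAt_update_iff {X : ARep n o} {e : ∀ v, X.M v →ₗ[ℂ] X.M v} {v : Fin (n + 1)}
    {u : X.M v →ₗ[ℂ] X.M v} {i : Fin n} (hv : v < i.castSucc) :
    X.CommutesAt (Function.update e v u) i ↔ X.CommutesAt e i := by
  rw [CommutesAt, CommutesAt, Function.update_of_ne (hv.trans_le (castSucc_le_ASrc i)).ne',
    Function.update_of_ne (hv.trans_le (castSucc_le_ATgt i)).ne']

theorem forall_commutesAt_castSucc {X : ARep n o} {e : ∀ v, X.M v →ₗ[ℂ] X.M v} {i : Fin n}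
    (hi : X.CommutesAt e i) (h : ∀ j : Fin n, i.succ ≤ j.castSucc → X.CommutesAt e j) :
    ∀ j : Fin n, i.castSucc ≤ j.castSucc → X.CommutesAt e j := by
  intro j hj
  rcases (Fin.castSucc_le_castSucc_iff.mp hj).eq_or_lt with rfl | hlt
  · exact hi
  · exact h j (Fin.succ_le_castSucc_iff.mpr hlt)

theorem forall_commutesAt_update_zero {X : ARep n o} {i : Fin n} {c : Fin (n + 1)}
    (hc : c = i.castSucc) {u : X.M c →ₗ[ℂ] X.M c} (hi : X.CommutesAt (Function.update 0 c u) i) :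
    ∀ j : Fin n, c ≤ j.castSucc → X.CommutesAt (Function.update 0 c u) j := by
  subst hc
  exact forall_commutesAt_castSucc hi fun j hj ↦
    (commutesAt_update_iff (Fin.castSucc_lt_succ.trans_le hj)).mpr (commutesAt_zero X j)

theorem exists_nontrivial_succ {X : ARep n o} {i : Fin n} {c s : Fin (n + 1)} (hc : c = i.castSucc)
    (hs : s = i.succ) (hX : ∃ v, c ≤ v ∧ Nontrivial (X.M v))
    (h : Nontrivial (X.M c) → Nontrivial (X.M s)) : ∃ v, s ≤ v ∧ Nontrivial (X.M v) := by
  subst hc hs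
  obtain ⟨v, hv, hnt⟩ := hX
  rcases hv.eq_or_lt with rfl | hlt
  · exact ⟨_, le_rfl, h hnt⟩
  · exact ⟨v, Fin.castSucc_lt_iff_succ_le.mp hlt, hnt⟩

/-- `e` is an idempotent endomorphism of the restriction of `X` to the vertices `≥ p` whose image
is the interval module on `[a, b]`. The chain `F` collects the subspaces at `p` that an extension
of `e` across the arrow to the left of `p` has to respect. -/
structure IsIntervalIdempotent (X : ARep n o) (p : Fin (n + 1)) (F : Set (Submodule ℂ (X.M p)))
    (e : ∀ v, X.M v →ₗ[ℂ] X.M v) (a b : Fin (n + 1)) : Prop where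
  le_left : p ≤ a
  left_le_right : a ≤ b
  idem : ∀ v, e v ∘ₗ e v = e v
  commutesAt : ∀ i : Fin n, p ≤ i.castSucc → X.CommutesAt e i
  finrank_range : ∀ v ∈ Set.Icc a b, finrank ℂ (range (e v)) = 1
  eq_zero : ∀ v ∉ Set.Icc a b, e v = 0
  f_comp_ne_zero : ∀ i : Fin n, a ≤ i.castSucc → i.succ ≤ b → X.f i ∘ₗ e (ASrc o i) ≠ 0
  splits : ∀ U ∈ F, U ≤ ker (e p) ∨ range (e p) ≤ U

namespace IsIntervalIdempotent

variable {X : ARep n o} {p : Fin (n + 1)} {F : Set (Submodule ℂ (X.M p))}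
  {e : ∀ v, X.M v →ₗ[ℂ] X.M v} {a b : Fin (n + 1)}

theorem eq_zero_of_lt (H : X.IsIntervalIdempotent p F e a b) {v : Fin (n + 1)} (hv : v < p) :
    e v = 0 :=
  H.eq_zero v fun h ↦ (hv.trans_le (H.le_left.trans h.1)).false

theorem left_eq (H : X.IsIntervalIdempotent p F e a b) (h : e p ≠ 0) : a = p :=
  le_antisymm (not_not.mp fun ha ↦ h (H.eq_zero p fun hp ↦ ha hp.1)) H.le_left

theorem single {u : X.M p →ₗ[ℂ] X.M p} (hu : u ∘ₗ u = u) (hrank : finrank ℂ (range u) = 1)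
    (hF : ∀ U ∈ F, U ≤ ker u ∨ range u ≤ U)
    (hcomm : ∀ i : Fin n, p ≤ i.castSucc → X.CommutesAt (Function.update 0 p u) i) :
    X.IsIntervalIdempotent p F (Function.update 0 p u) p p where
  le_left := le_rfl
  left_le_right := le_rfl
  idem v := by
    rcases eq_or_ne v p with rfl | hv
    · simpa using hu
    · simp [hv]
  commutesAt := hcomm
  finrank_range v hv := by
    obtain rfl := le_antisymm hv.2 hv.1
    rwa [Function.update_self]
  eq_zero v hv := Function.update_of_ne (fun h ↦ hv ⟨h.ge, h.le⟩) _ _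
  f_comp_ne_zero i h₁ h₂ := absurd (h₁.trans_lt Fin.castSucc_lt_succ) h₂.not_gt
  splits := by simpa using hF

theorem of_succ {i : Fin n} {c s : Fin (n + 1)} (hc : c = i.castSucc) (hs : s = i.succ)
    {F' : Set (Submodule ℂ (X.M s))} (H : X.IsIntervalIdempotent s F' e a b)
    (hi : X.CommutesAt e i) (F : Set (Submodule ℂ (X.M c))) : X.IsIntervalIdempotent c F e a b := by
  subst hc hs
  have hc : e i.castSucc = 0 := H.eq_zero_of_lt Fin.castSucc_lt_succ
  exact { H with
    le_left := Fin.castSucc_lt_succ.le.trans H.le_left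
    commutesAt := forall_commutesAt_castSucc hi H.commutesAt
    splits := fun _ _ ↦ Or.inl (by simp [hc]) }

theorem extend {i : Fin n} {c s : Fin (n + 1)} (hc : c = i.castSucc) (hs : s = i.succ)
    {F' : Set (Submodule ℂ (X.M s))} (H : X.IsIntervalIdempotent s F' e s b)
    {F : Set (Submodule ℂ (X.M c))} {u : X.M c →ₗ[ℂ] X.M c} (hu : u ∘ₗ u = u)
    (hrank : finrank ℂ (range u) = 1) (hF : ∀ U ∈ F, U ≤ ker u ∨ range u ≤ U)
    (hi : X.CommutesAt (Function.update e c u) i)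
    (hf : X.f i ∘ₗ Function.update e c u (ASrc o i) ≠ 0) :
    X.IsIntervalIdempotent c F (Function.update e c u) c b := by
  subst hc hs
  have hlt : ∀ {v}, i.castSucc < v ↔ i.succ ≤ v := Fin.castSucc_lt_iff_succ_le
  refine ⟨le_rfl, Fin.castSucc_lt_succ.le.trans H.left_le_right, fun v ↦ ?_, ?_,
    fun v hv ↦ ?_, fun v hv ↦ ?_, fun j h₁ h₂ ↦ ?_, by simpa using hF⟩
  · rcases eq_or_ne v i.castSucc with rfl | hv
    · simpa using hu
    · simpa [hv] using H.idem v
  · exact forall_commutesAt_castSucc hi fun j hj ↦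
      (commutesAt_update_iff (hlt.mpr hj)).mpr (H.commutesAt j hj)
  · rcases hv.1.eq_or_lt with rfl | hv₁
    · rwa [Function.update_self]
    · rw [Function.update_of_ne hv₁.ne']
      exact H.finrank_range v ⟨hlt.mp hv₁, hv.2⟩
  · have hv₁ : v ≠ i.castSucc := fun h ↦
      hv ⟨h.ge, h ▸ Fin.castSucc_lt_succ.le.trans H.left_le_right⟩
    rw [Function.update_of_ne hv₁]
    exact H.eq_zero v fun h ↦ hv ⟨(Fin.castSucc_lt_succ.le.trans h.1), h.2⟩
  · rcases (Fin.castSucc_le_castSucc_iff.mp h₁).eq_or_lt with rfl | hij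
    · exact hf
    · have hj : i.succ ≤ j.castSucc := Fin.succ_le_castSucc_iff.mpr hij
      rw [Function.update_of_ne (hlt.mpr (hj.trans (castSucc_le_ASrc j))).ne']
      exact H.f_comp_ne_zero j hj h₂

end IsIntervalIdempotent

def HasIntervalIdempotents (X : ARep n o) (p : Fin (n + 1)) : Prop :=
  (∃ v, p ≤ v ∧ Nontrivial (X.M v)) → ∀ F : Set (Submodule ℂ (X.M p)), IsChain (· ≤ ·) F →
    ∃ e a b, X.IsIntervalIdempotent p F e a b

theorem hasIntervalIdempotents_last (X : ARep n o) : X.HasIntervalIdempotents (Fin.last n) := by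
  rintro ⟨v, hv, hnt⟩ F hF
  obtain rfl := (Fin.le_last v).antisymm hv
  obtain ⟨u, hu, hrank, -, -, hFu⟩ := exists_comp_self_splitting bot_le bot_lt_top.not_ge hF
  exact ⟨_, _, _, .single hu hrank hFu fun j hj ↦ absurd hj (Fin.castSucc_lt_last j).not_ge⟩

theorem hasIntervalIdempotents_src {X : ARep n o} {i : Fin n} (ho : o i = true)
    (h : X.HasIntervalIdempotents (ATgt o i)) : X.HasIntervalIdempotents (ASrc o i) := by
  have hc := ASrc_of_true ho
  have hs := ATgt_of_true ho
  have hsc : ATgt o i ≠ ASrc o i := by rw [hc, hs]; exact Fin.castSucc_lt_succ.ne'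
  intro hX F hF
  set g := X.f i
  by_cases hg : Function.Injective g
  · have hF' : IsChain (· ≤ ·) (insert (range g) (map g '' F)) :=
      (Monotone.isChain_image (fun _ _ ↦ map_mono) hF).insert fun _ ⟨_, _, hU⟩ _ ↦
        Or.inr (hU ▸ map_le_range)
    obtain ⟨e, a, b, H⟩ := h (exists_nontrivial_succ hc hs hX fun _ ↦ hg.nontrivial) _ hF'
    by_cases he : e (ATgt o i) ∘ₗ g = 0
    · refine ⟨e, a, b, H.of_succ hc hs ?_ F⟩
      rw [CommutesAt, he, H.eq_zero_of_lt (hc ▸ hs ▸ Fin.castSucc_lt_succ), comp_zero]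
    · have hrange : range (e (ATgt o i)) ≤ range g :=
        (H.splits _ (Set.mem_insert _ _)).resolve_left fun hle ↦ he (by ext x; exact hle ⟨x, rfl⟩)
      obtain rfl := H.left_eq fun h0 ↦ he (by rw [h0, zero_comp])
      obtain ⟨u, hu, hrank, hcomm, hFu⟩ := exists_intertwined_comp_self_of_injective hg (H.idem _)
        (H.finrank_range _ ⟨le_rfl, H.left_le_right⟩) hrange
        fun U hU ↦ H.splits _ (Set.mem_insert_of_mem _ ⟨U, hU, rfl⟩)
      refine ⟨_, _, _, H.extend hc hs hu hrank hFu ?_ ?_⟩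
      · rw [CommutesAt, Function.update_self, Function.update_of_ne hsc, hcomm]
      · rwa [Function.update_self, ← hcomm]
  · -- a line in `ker g` splits off as a simple summand at `ASrc o i`
    obtain ⟨u, hu, hrank, hrange, -, hFu⟩ :=
      exists_comp_self_splitting bot_le (by rwa [le_bot_iff, ker_eq_bot] : ¬ker g ≤ ⊥) hF
    refine ⟨_, _, _, .single hu hrank hFu (forall_commutesAt_update_zero hc ?_)⟩
    rw [CommutesAt, Function.update_self, Function.update_of_ne hsc]
    ext x
    exact (hrange ⟨x, rfl⟩).symm

theorem hasIntervalIdempotents_tgt {X : ARep n o} {i : Fin n} (ho : o i = false)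
    (h : X.HasIntervalIdempotents (ASrc o i)) : X.HasIntervalIdempotents (ATgt o i) := by
  have hc := ATgt_of_false ho
  have hs := ASrc_of_false ho
  have hsc : ASrc o i ≠ ATgt o i := by rw [hc, hs]; exact Fin.castSucc_lt_succ.ne'
  intro hX F hF
  set g := X.f i
  by_cases hg : Function.Surjective g
  · have hF' : IsChain (· ≤ ·) (insert (ker g) (comap g '' F)) :=
      (Monotone.isChain_image (fun _ _ ↦ comap_mono) hF).insert fun _ ⟨_, _, hU⟩ _ ↦
        Or.inl (hU ▸ comap_mono bot_le)
    obtain ⟨e, a, b, H⟩ := h (exists_nontrivial_succ hc hs hX fun _ ↦ hg.nontrivial) _ hF'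
    by_cases he : g ∘ₗ e (ASrc o i) = 0
    · refine ⟨e, a, b, H.of_succ hc hs ?_ F⟩
      rw [CommutesAt, he, H.eq_zero_of_lt (hc ▸ hs ▸ Fin.castSucc_lt_succ), zero_comp]
    · have hker : ker g ≤ ker (e (ASrc o i)) :=
        (H.splits _ (Set.mem_insert _ _)).resolve_right fun hle ↦
          he (by ext x; exact hle ⟨x, rfl⟩)
      obtain rfl := H.left_eq fun h0 ↦ he (by rw [h0, comp_zero])
      obtain ⟨u, hu, hrank, hcomm, hFu⟩ := exists_intertwined_comp_self_of_surjective hg (H.idem _)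
        (H.finrank_range _ ⟨le_rfl, H.left_le_right⟩) hker he
        fun U hU ↦ H.splits _ (Set.mem_insert_of_mem _ ⟨U, hU, rfl⟩)
      refine ⟨_, _, _, H.extend hc hs hu hrank hFu ?_ ?_⟩
      · rw [CommutesAt, Function.update_self, Function.update_of_ne hsc, hcomm]
      · rwa [Function.update_of_ne hsc]
  · -- a line outside `range g` splits off as a simple summand at `ATgt o i`
    obtain ⟨u, hu, hrank, -, hker, hFu⟩ :=
      exists_comp_self_splitting le_top (by rwa [top_le_iff, range_eq_top] : ¬⊤ ≤ range g) hF
    refine ⟨_, _, _, .single hu hrank hFu (forall_commutesAt_update_zero hc ?_)⟩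
    rw [CommutesAt, Function.update_self, Function.update_of_ne hsc]
    ext x
    simpa using hker ⟨x, rfl⟩

theorem hasIntervalIdempotents (X : ARep n o) (p : Fin (n + 1)) : X.HasIntervalIdempotents p := by
  induction p using Fin.reverseInduction with
  | last => exact X.hasIntervalIdempotents_last
  | cast i ih =>
    cases ho : o i
    · rw [← ATgt_of_false ho]
      exact hasIntervalIdempotents_tgt ho (by rwa [ASrc_of_false ho])
    · rw [← ASrc_of_true ho]
      exact hasIntervalIdempotents_src ho (by rwa [ATgt_of_true ho])

structure IsInterval (X : ARep n o) (a b : Fin (n + 1)) : Prop where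
  le : a ≤ b
  subsingleton : ∀ v ∉ Set.Icc a b, Subsingleton (X.M v)
  finrank_eq_one : ∀ v ∈ Set.Icc a b, finrank ℂ (X.M v) = 1
  f_ne_zero : ∀ i : Fin n, a ≤ i.castSucc → i.succ ≤ b → X.f i ≠ 0

theorem Indecomposable.exists_isInterval {X : ARep n o} (hX : X.Indecomposable) :
    ∃ a b, X.IsInterval a b := by
  obtain ⟨⟨v, x, hx⟩, hidem⟩ := hX
  obtain ⟨e, a, b, H⟩ := X.hasIntervalIdempotents 0 ⟨v, Fin.zero_le v, nontrivial_of_ne x 0 hx⟩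
    ∅ IsChain.empty
  have ha : a ∈ Set.Icc a b := ⟨le_rfl, H.left_le_right⟩
  rcases hidem e (fun i ↦ H.commutesAt i (Fin.zero_le _)) H.idem with rfl | rfl
  · have := H.finrank_range a ha
    rw [Pi.zero_apply, range_zero, finrank_bot] at this
    exact absurd this zero_ne_one
  · refine ⟨a, b, H.left_le_right, fun v hv ↦ ?_, fun v hv ↦ ?_, fun i h₁ h₂ ↦ ?_⟩
    · exact subsingleton_of_forall_eq 0 fun y ↦ by simpa using congr($(H.eq_zero v hv) y)
    · have := H.finrank_range v hv
      rwa [range_id, finrank_top] at this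
    · simpa using H.f_comp_ne_zero i h₁ h₂

namespace IsInterval

variable {X : ARep n o} {a b : Fin (n + 1)}

theorem bijective (hX : X.IsInterval a b) {i : Fin n} (ha : a ≤ i.castSucc) (hb : i.succ ≤ b) :
    Function.Bijective (X.f i) :=
  bijective_of_finrank_eq_one (hX.finrank_eq_one _ (ASrc_mem_Icc ha hb))
    (hX.finrank_eq_one _ (ATgt_mem_Icc ha hb)) (hX.f_ne_zero i ha hb)

end IsInterval

theorem apply_ASrc_eq_zero_iff {X Y : ARep n o} {h : ∀ v, X.M v →ₗ[ℂ] Y.M v}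
    (hh : h ∈ HomSub X Y) {i : Fin n} (hX : Function.Surjective (X.f i))
    (hY : Function.Injective (Y.f i)) : h (ASrc o i) = 0 ↔ h (ATgt o i) = 0 :=
  calc h (ASrc o i) = 0 ↔ Y.f i ∘ₗ h (ASrc o i) = Y.f i ∘ₗ 0 := (cancel_left hY).symm
    _ ↔ h (ATgt o i) ∘ₗ X.f i = 0 ∘ₗ X.f i := by rw [← hh i, comp_zero, zero_comp]
    _ ↔ h (ATgt o i) = 0 := cancel_right hX

theorem apply_eq_zero_iff_of_mem_Icc {X Y : ARep n o} {h : ∀ v, X.M v →ₗ[ℂ] Y.M v}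
    (hh : h ∈ HomSub X Y) {a b : Fin (n + 1)}
    (hXY : ∀ i : Fin n, a ≤ i.castSucc → i.succ ≤ b →
      Function.Surjective (X.f i) ∧ Function.Injective (Y.f i))
    {v : Fin (n + 1)} (hv : v ∈ Set.Icc a b) : h v = 0 ↔ h a = 0 :=
  iff_of_forall_castSucc_iff_succ (P := fun v ↦ h v = 0) (fun i ha hb ↦
    castSucc_iff_succ_of_ASrc_iff_ATgt (P := fun v ↦ h v = 0)
      (apply_ASrc_eq_zero_iff hh (hXY i ha hb).1 (hXY i ha hb).2)) v hv

theorem IsInterval.indecomposable {X : ARep n o} {a b : Fin (n + 1)} (hX : X.IsInterval a b) :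
    X.Indecomposable := by
  have ha : a ∈ Set.Icc a b := ⟨le_rfl, hX.le⟩
  have := Module.nontrivial_of_finrank_eq_succ (hX.finrank_eq_one a ha)
  obtain ⟨x, hx⟩ := exists_ne (0 : X.M a)
  refine ⟨⟨a, x, hx⟩, fun e he hidem ↦ ?_⟩
  have hchain {v} (hv : v ∈ Set.Icc a b) : e v = 0 ↔ e a = 0 :=
    apply_eq_zero_iff_of_mem_Icc he (fun i h₁ h₂ ↦
      ⟨(hX.bijective h₁ h₂).surjective, (hX.bijective h₁ h₂).injective⟩) hv
  have houtside {v} (hv : v ∉ Set.Icc a b) (u u' : X.M v →ₗ[ℂ] X.M v) : u = u' :=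
    have := hX.subsingleton v hv
    Subsingleton.elim u u'
  rcases eq_zero_or_eq_id_of_comp_self (hX.finrank_eq_one a ha) (hidem a) with h0 | hid
  · refine Or.inl (funext fun v ↦ ?_)
    by_cases hv : v ∈ Set.Icc a b
    · exact (hchain hv).mpr h0
    · exact houtside hv _ _
  · refine Or.inr (funext fun v ↦ ?_)
    by_cases hv : v ∈ Set.Icc a b
    · refine (eq_zero_or_eq_id_of_comp_self (hX.finrank_eq_one v hv) (hidem v)).resolve_left
        fun h0 ↦ hx ?_
      rw [← LinearMap.id_apply (R := ℂ) x, ← hid, (hchain hv).mp h0, LinearMap.zero_apply]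
    · exact houtside hv _ _

namespace IsInterval

variable {L E : ARep n o} {a b c d : Fin (n + 1)}

theorem apply_eq_zero_of_not_mem_Icc (hL : L.IsInterval a b) (hE : E.IsInterval c d)
    (h : ∀ v, L.M v →ₗ[ℂ] E.M v) {v : Fin (n + 1)} (hv : v ∉ Set.Icc (a ⊔ c) (b ⊓ d)) :
    h v = 0 := by
  rw [← Set.Icc_inter_Icc, Set.mem_inter_iff, not_and_or] at hv
  rcases hv with hv | hv
  · have := hL.subsingleton v hv
    exact Subsingleton.elim _ _
  · have := hE.subsingleton v hv
    exact Subsingleton.elim _ _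

theorem apply_ne_zero_of_mem_Icc (hL : L.IsInterval a b) (hE : E.IsInterval c d)
    {h : ∀ v, L.M v →ₗ[ℂ] E.M v} (hh : h ∈ HomSub L E) {v w : Fin (n + 1)}
    (hv : v ∈ Set.Icc (a ⊔ c) (b ⊓ d)) (hw : w ∈ Set.Icc (a ⊔ c) (b ⊓ d)) (hw₀ : h w ≠ 0) :
    h v ≠ 0 := by
  have hchain {u} (hu : u ∈ Set.Icc (a ⊔ c) (b ⊓ d)) := apply_eq_zero_iff_of_mem_Icc hh
    (fun i h₁ h₂ ↦
      ⟨(hL.bijective (le_sup_left.trans h₁) (h₂.trans inf_le_left)).surjective,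
        (hE.bijective (le_sup_right.trans h₁) (h₂.trans inf_le_right)).injective⟩) hu
  exact fun h0 ↦ hw₀ ((hchain hw).mpr ((hchain hv).mp h0))

end IsInterval

theorem imRep_isInterval {L E : ARep n o} {a b c d : Fin (n + 1)} (hL : L.IsInterval a b)
    (hE : E.IsInterval c d) {h : ∀ v, L.M v →ₗ[ℂ] E.M v} (hh : h ∈ HomSub L E) (hne : h ≠ 0) :
    (imRep L E h hh).IsInterval (a ⊔ c) (b ⊓ d) := by
  obtain ⟨w, hw⟩ : ∃ w, h w ≠ 0 := by
    by_contra! h0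
    exact hne (funext h0)
  have hwI : w ∈ Set.Icc (a ⊔ c) (b ⊓ d) :=
    not_not.mp fun hwI ↦ hw (hL.apply_eq_zero_of_not_mem_Icc hE h hwI)
  have hrank {v} (hv : v ∈ Set.Icc (a ⊔ c) (b ⊓ d)) : finrank ℂ (range (h v)) = 1 := by
    refine le_antisymm ((finrank_range_le _).trans ?_) (one_le_finrank_iff.mpr ?_)
    · exact (hL.finrank_eq_one v ⟨le_sup_left.trans hv.1, hv.2.trans inf_le_left⟩).le
    · rw [Ne, range_eq_bot]
      exact hL.apply_ne_zero_of_mem_Icc hE hh hv hwI hw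
  refine ⟨hwI.1.trans hwI.2, fun v hv ↦ ?_, fun v hv ↦ hrank hv, fun i h₁ h₂ ↦ ?_⟩
  · change Subsingleton (range (h v))
    rw [hL.apply_eq_zero_of_not_mem_Icc hE h hv, range_zero]
    infer_instance
  · have := Module.nontrivial_of_finrank_eq_succ (hrank (ASrc_mem_Icc (o := o) h₁ h₂))
    obtain ⟨y, hy⟩ := exists_ne (0 : range (h (ASrc o i)))
    have hinj := (hE.bijective (le_sup_right.trans h₁) (h₂.trans inf_le_right)).injective
    refine fun h0 ↦ hy (Subtype.ext (hinj ?_))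
    rw [ZeroMemClass.coe_zero, map_zero]
    exact congr_arg Subtype.val (LinearMap.congr_fun h0 y)

/-- The image of a nonzero homomorphism between indecomposable
representations of a type `A` quiver is indecomposable. -/
theorem imRep_indecomposable {n : ℕ} {o : Fin n → Bool} (L E : ARep n o)
    (hL : L.Indecomposable) (hE : E.Indecomposable)
    (h : ∀ v, L.M v →ₗ[ℂ] E.M v) (hh : h ∈ HomSub L E) (hne : h ≠ 0) :
    (imRep L E h hh).Indecomposable := by
  obtain ⟨a, b, hab⟩ := hL.exists_isInterval
  obtain ⟨c, d, hcd⟩ := hE.exists_isInterval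
  exact (imRep_isInterval hab hcd hh hne).indecomposable

end ARep
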